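/- arXiv:2407.10942 — 3 statements merged into one kernel-verified Lean document; each statement's English description precedes it below -/
import Mathlib

section
/- With f₀ as above (a = (√5+1)/2, b = (√5-1)/2), one has x ≤ f₀(x) ≤ 0 for all x ∈ [−1,0]; in particular |f₀(x)| ≤ |x| on [−1,0]. -/
/-!
Since `aK + bK = √5`, the derivative of `f₀` is `(cosh (√aK x) - cos (√bK x)) / √5`. It is
nonnegative because `cos ≤ 1 ≤ cosh`, and on `[-1, 1]` it is at most `1` by
`cosh y ≤ exp (y² / 2)` and `cos z ≥ 1 - z² / 2`. So `f₀` is monotone and `1`-Lipschitz on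
`[-1, 1]`, and `f₀ 0 = 0` gives `x ≤ f₀ x ≤ 0` for `x ∈ [-1, 0]`.
-/

noncomputable def aK : ℝ := (Real.sqrt 5 + 1) / 2
noncomputable def bK : ℝ := (Real.sqrt 5 - 1) / 2

noncomputable def f₀ : ℝ → ℝ := fun x =>
  1 / (Real.sqrt aK * (aK + bK)) * Real.sinh (Real.sqrt aK * x)
    - 1 / (Real.sqrt bK * (aK + bK)) * Real.sin (Real.sqrt bK * x)

noncomputable def g₀ : ℝ → ℝ := fun x =>
  1 / (aK * (aK + bK)) * Real.cosh (Real.sqrt aK * x)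
    + 1 / (bK * (aK + bK)) * Real.cos (Real.sqrt bK * x)
    - 1 / (aK * (aK + bK)) - 1 / (bK * (aK + bK))

open Real Set

lemma hasDerivAt_sinh_sub_sin {p q s : ℝ} (hp : p ≠ 0) (hq : q ≠ 0) (x : ℝ) :
    HasDerivAt (fun x => 1 / (p * s) * sinh (p * x) - 1 / (q * s) * sin (q * x))
      ((cosh (p * x) - cos (q * x)) / s) x := by
  have hsinh := ((hasDerivAt_id' x).const_mul p).sinh.const_mul (1 / (p * s))
  have hsin := ((hasDerivAt_id' x).const_mul q).sin.const_mul (1 / (q * s))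
  refine (hsinh.sub hsin).congr_deriv ?_
  field_simp

lemma cosh_sub_cos_le {y : ℝ} (hy : y ^ 2 ≤ 2) (z : ℝ) :
    cosh y - cos z ≤ exp 1 - 1 + z ^ 2 / 2 := by
  have hcosh : cosh y ≤ exp 1 :=
    (cosh_le_exp_half_sq y).trans (exp_le_exp.2 (by linarith))
  linarith [one_sub_sq_div_two_le_cos (x := z)]

lemma two_le_sqrt_five : 2 ≤ √5 :=
  le_sqrt_of_sq_le (by norm_num)

lemma sqrt_five_le_three : √5 ≤ 3 :=
  sqrt_le_iff.2 ⟨by norm_num, by norm_num⟩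

lemma aK_add_bK : aK + bK = √5 := by
  unfold aK bK; ring

lemma aK_le_two : aK ≤ 2 := by
  unfold aK; linarith [sqrt_five_le_three]

lemma aK_pos : 0 < aK := by
  unfold aK; positivity

lemma bK_pos : 0 < bK := by
  unfold bK; linarith [two_le_sqrt_five]

noncomputable def f₀' (x : ℝ) : ℝ :=
  (cosh (√aK * x) - cos (√bK * x)) / √5

lemma hasDerivAt_f₀ (x : ℝ) : HasDerivAt f₀ (f₀' x) x := by
  rw [f₀', ← aK_add_bK]
  exact hasDerivAt_sinh_sub_sin (sqrt_pos.2 aK_pos).ne' (sqrt_pos.2 bK_pos).ne' x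

lemma f₀'_nonneg (x : ℝ) : 0 ≤ f₀' x :=
  div_nonneg (sub_nonneg.2 ((cos_le_one _).trans (one_le_cosh _))) (sqrt_nonneg 5)

lemma f₀'_le_one {x : ℝ} (hx : |x| ≤ 1) : f₀' x ≤ 1 := by
  have hx2 : x ^ 2 ≤ 1 := (sq_le_one_iff_abs_le_one x).2 hx
  have ha : (√aK * x) ^ 2 ≤ 2 := by
    rw [mul_pow, sq_sqrt aK_pos.le]; nlinarith [aK_le_two, sq_nonneg x]
  have hb : (√bK * x) ^ 2 ≤ bK := by
    rw [mul_pow, sq_sqrt bK_pos.le]; exact mul_le_of_le_one_right bK_pos.le hx2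
  rw [f₀', div_le_one (by linarith [two_le_sqrt_five])]
  -- `e - 1 + bK / 2 ≤ √5` already holds for `√5 ≥ 2`
  have hbK : bK = (√5 - 1) / 2 := rfl
  linarith [cosh_sub_cos_le ha (√bK * x), exp_one_lt_d9, two_le_sqrt_five]

lemma f₀_zero : f₀ 0 = 0 := by
  simp [f₀]

lemma monotone_f₀ : Monotone f₀ :=
  monotone_of_hasDerivAt_nonneg hasDerivAt_f₀ f₀'_nonneg

lemma abs_f₀_sub_le {x y : ℝ} (hx : x ∈ Icc (-1) 1) (hy : y ∈ Icc (-1) 1) :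
    |f₀ y - f₀ x| ≤ |y - x| := by
  have hbound : ∀ z ∈ Icc (-1 : ℝ) 1, ‖f₀' z‖ ≤ 1 := fun z hz => by
    rw [Real.norm_of_nonneg (f₀'_nonneg z)]
    exact f₀'_le_one (abs_le.2 hz)
  simpa using (convex_Icc (-1 : ℝ) 1).norm_image_sub_le_of_norm_hasDerivWithin_le
    (fun z _ => (hasDerivAt_f₀ z).hasDerivWithinAt) hbound hx hy

theorem f₀_bounds :
    ∀ x ∈ Set.Icc (-1 : ℝ) 0, x ≤ f₀ x ∧ f₀ x ≤ 0 ∧ |f₀ x| ≤ |x| := by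
  rintro x ⟨hx₁, hx₀⟩
  have hnonpos : f₀ x ≤ 0 := f₀_zero ▸ monotone_f₀ hx₀
  have habs : |f₀ x| ≤ |x| := by
    simpa [f₀_zero, abs_sub_comm] using
      abs_f₀_sub_le (x := 0) (y := x) ⟨by norm_num, zero_le_one⟩ ⟨hx₁, hx₀.trans zero_le_one⟩
  refine ⟨?_, hnonpos, habs⟩
  rw [abs_of_nonpos hnonpos, abs_of_nonpos hx₀] at habs
  linarith
end

section
/- Suppose (f_j)_{j≥0} are smooth functions on [−1,0] with f_j' + f_j''' − f_j⁽⁵⁾ = −f_{j−1} for j ≥ 1, boundary conditions f_j(0) = f_j'(0) = f_j''(0) = f_j'''(0) = f_j⁗(0) = 0 for j ≥ 1, and f₀ satisfying f₀' + f₀''' − f₀⁽⁵⁾ = 0 with f₀(0)=f₀'(0)=f₀''(0)=f₀⁗(0)=0, f₀'''(0)=1. Then for every j ≥ 1 and x ∈ [−1,0], f_j(x) = ∫₀ˣ ∫₀ʸ f₀(y−ξ) f_{j−1}(ξ) dξ dy. -/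
open MeasureTheory Set intervalIntegral

private lemma ftc_cont {f : ℝ → ℝ} (hf : Continuous f) (a t : ℝ) :
    HasDerivAt (fun u => ∫ x in a..u, f x) (f t) t :=
  intervalIntegral.integral_hasDerivAt_right (hf.intervalIntegrable _ _)
    (hf.stronglyMeasurableAtFilter _ _) hf.continuousAt

private lemma triangle_swap (G : ℝ × ℝ → ℝ) (hG : Continuous G) {y : ℝ} (hy : y ≤ 0) :
    ∫ ξ in (0:ℝ)..y, ∫ t in ξ..y, G (t, ξ) = ∫ t in (0:ℝ)..y, ∫ ξ in (0:ℝ)..t, G (t, ξ) := by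
  set S : Set (ℝ × ℝ) := {p | y < p.2 ∧ p.2 ≤ p.1} with hSdef
  have hS : MeasurableSet S :=
    (measurableSet_lt measurable_const measurable_snd).inter
      (measurableSet_le measurable_snd measurable_fst)
  set Fn : ℝ × ℝ → ℝ := S.indicator (fun p => G (p.2, p.1)) with hFdef
  have hint : Integrable Fn ((volume.restrict (Ioc y 0)).prod (volume.restrict (Ioc y 0))) := by
    rw [Measure.prod_restrict]
    refine IntegrableOn.mono_set ?_ (prod_mono Ioc_subset_Icc_self Ioc_subset_Icc_self)
    exact ((hG.comp continuous_swap).continuousOn.integrableOn_compact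
      (isCompact_Icc.prod isCompact_Icc)).indicator hS
  have hLHS : ∫ ξ in (0:ℝ)..y, ∫ t in ξ..y, G (t, ξ)
      = ∫ ξ in Ioc y 0, ∫ t in Ioc y ξ, G (t, ξ) := by
    rw [intervalIntegral.integral_symm, intervalIntegral.integral_of_le hy, ← MeasureTheory.integral_neg]
    refine setIntegral_congr_fun measurableSet_Ioc fun ξ hξ => ?_
    rw [intervalIntegral.integral_symm, neg_neg, intervalIntegral.integral_of_le hξ.1.le]
  have hRHS : ∫ t in (0:ℝ)..y, ∫ ξ in (0:ℝ)..t, G (t, ξ)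
      = ∫ t in Ioc y 0, ∫ ξ in Ioc t 0, G (t, ξ) := by
    rw [intervalIntegral.integral_symm, intervalIntegral.integral_of_le hy, ← MeasureTheory.integral_neg]
    refine setIntegral_congr_fun measurableSet_Ioc fun t ht => ?_
    rw [intervalIntegral.integral_symm, neg_neg, intervalIntegral.integral_of_le ht.2]
  rw [hLHS, hRHS]
  calc ∫ ξ in Ioc y 0, ∫ t in Ioc y ξ, G (t, ξ)
      = ∫ ξ in Ioc y 0, ∫ t in Ioc y 0, Fn (ξ, t) := by
        refine setIntegral_congr_fun measurableSet_Ioc fun ξ hξ => ?_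
        have h1 : (fun t => Fn (ξ, t)) = (Ioc y ξ).indicator (fun t => G (t, ξ)) := by
          funext t
          by_cases ht : t ∈ Ioc y ξ
          · rw [indicator_of_mem ht, hFdef, indicator_of_mem]
            exact ⟨ht.1, ht.2⟩
          · rw [indicator_of_notMem ht, hFdef, indicator_of_notMem]
            intro hc; exact ht ⟨hc.1, hc.2⟩
        rw [h1, setIntegral_indicator measurableSet_Ioc,
          inter_eq_self_of_subset_right (Ioc_subset_Ioc_right hξ.2)]
    _ = ∫ t in Ioc y 0, ∫ ξ in Ioc y 0, Fn (ξ, t) :=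
        integral_integral_swap (f := fun ξ t => Fn (ξ, t)) hint
    _ = ∫ t in Ioc y 0, ∫ ξ in Ioc t 0, G (t, ξ) := by
        refine setIntegral_congr_fun measurableSet_Ioc fun t ht => ?_
        have h1 : (fun ξ => Fn (ξ, t)) = (Ici t).indicator (fun ξ => G (t, ξ)) := by
          funext ξ
          by_cases hξ : ξ ∈ Ici t
          · rw [indicator_of_mem hξ, hFdef, indicator_of_mem]
            exact ⟨ht.1, hξ⟩
          · rw [indicator_of_notMem hξ, hFdef, indicator_of_notMem]
            intro hc; exact hξ hc.2
        have h2 : Ioc y 0 ∩ Ici t = Icc t 0 := by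
          ext ξ
          simp only [mem_inter_iff, mem_Ioc, mem_Ici, mem_Icc]
          constructor
          · rintro ⟨⟨_, h⟩, h'⟩; exact ⟨h', h⟩
          · rintro ⟨h, h'⟩; exact ⟨⟨lt_of_lt_of_le ht.1 h, h'⟩, h⟩
        rw [h1, setIntegral_indicator measurableSet_Ici, h2, integral_Icc_eq_integral_Ioc]

theorem fj_integral_representation (f : ℕ → ℝ → ℝ)
    (hsm : ∀ j, ContDiff ℝ (⊤ : ℕ∞) (f j))
    (hode0 : ∀ x ∈ Set.Icc (-1 : ℝ) 0,
      deriv (f 0) x + iteratedDeriv 3 (f 0) x - iteratedDeriv 5 (f 0) x = 0)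
    (hbc0 : f 0 0 = 0 ∧ deriv (f 0) 0 = 0 ∧ iteratedDeriv 2 (f 0) 0 = 0 ∧
      iteratedDeriv 4 (f 0) 0 = 0 ∧ iteratedDeriv 3 (f 0) 0 = 1)
    (hode : ∀ j, 1 ≤ j → ∀ x ∈ Set.Icc (-1 : ℝ) 0,
      deriv (f j) x + iteratedDeriv 3 (f j) x - iteratedDeriv 5 (f j) x = -(f (j - 1) x))
    (hbc : ∀ j, 1 ≤ j → f j 0 = 0 ∧ deriv (f j) 0 = 0 ∧ iteratedDeriv 2 (f j) 0 = 0 ∧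
      iteratedDeriv 3 (f j) 0 = 0 ∧ iteratedDeriv 4 (f j) 0 = 0) :
    ∀ j, 1 ≤ j → ∀ x ∈ Set.Icc (-1 : ℝ) 0,
      f j x = ∫ y in (0 : ℝ)..x, ∫ ξ in (0 : ℝ)..y, f 0 (y - ξ) * f (j - 1) ξ := by
  obtain ⟨h00, h01, h02, h04, h03⟩ := hbc0
  intro j hj x hx
  set q : ℝ → ℝ := f (j - 1) with hqdef
  have hq : Continuous q := (hsm _).continuous
  set D : ℕ → ℝ → ℝ := fun n => iteratedDeriv n (f 0) with hDdef
  have hDc : ∀ n, Continuous (D n) := fun n => (hsm 0).continuous_iteratedDeriv n (by exact_mod_cast le_top)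
  have hDd : ∀ n (t : ℝ), HasDerivAt (D n) (D (n + 1) t) t := by
    intro n t
    have hd := ((hsm 0).differentiable_iteratedDeriv n (by exact_mod_cast ENat.coe_lt_top n)) t
    simpa [hDdef, iteratedDeriv_succ] using hd.hasDerivAt
  -- boundary values of D
  have hD00 : D 0 0 = 0 := by simp only [hDdef]; rwa [iteratedDeriv_zero]
  have hD10 : D 1 0 = 0 := by simp only [hDdef]; rwa [iteratedDeriv_one]
  have hD20 : D 2 0 = 0 := h02
  have hD30 : D 3 0 = 1 := h03
  have hD40 : D 4 0 = 0 := h04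
  have hodeD : ∀ z ∈ Set.Icc (-1:ℝ) 0, D 1 z + D 3 z - D 5 z = 0 := by
    intro z hz
    have h := hode0 z hz
    simp only [hDdef]
    rwa [iteratedDeriv_one]
  set K : ℕ → ℝ → ℝ := fun n y => ∫ ξ in (0:ℝ)..y, D n (y - ξ) * q ξ with hKdef
  have hKint : ∀ n (y a b : ℝ), IntervalIntegrable (fun ξ => D n (y - ξ) * q ξ) volume a b :=
    fun n y a b =>
      (((hDc n).comp (continuous_const.sub continuous_id)).mul hq).intervalIntegrable a b
  have hKc : ∀ n, Continuous (K n) := by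
    intro n
    rw [hKdef]
    exact intervalIntegral.continuous_parametric_intervalIntegral_of_continuous
      (f := fun y ξ => D n (y - ξ) * q ξ)
      (((hDc n).comp (continuous_fst.sub continuous_snd)).mul (hq.comp continuous_snd))
      continuous_id
  have hH : ∀ n (z : ℝ), D n z = D n 0 + ∫ s in (0:ℝ)..z, D (n+1) s := by
    intro n z
    have h := intervalIntegral.integral_eq_sub_of_hasDerivAt (f := D n) (f' := D (n+1)) (a := 0) (b := z)
      (fun t _ => hDd n t) ((hDc (n+1)).intervalIntegrable 0 z)
    linarith
  have hrep : ∀ n, ∀ y ≤ (0:ℝ), K n y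
      = D n 0 * (∫ ξ in (0:ℝ)..y, q ξ) + ∫ t in (0:ℝ)..y, K (n+1) t := by
    intro n y hy
    have hconv : ∀ ξ : ℝ, (∫ t in ξ..y, D (n+1) (t - ξ) * q ξ)
        = (∫ s in (0:ℝ)..(y - ξ), D (n+1) s) * q ξ := by
      intro ξ
      have e1 := intervalIntegral.integral_comp_sub_right (a := ξ) (b := y)
        (fun s => D (n+1) s * q ξ) ξ
      simp only [sub_self] at e1
      rw [e1, intervalIntegral.integral_mul_const]
    have hpoint : ∀ ξ : ℝ, D n (y - ξ) * q ξ
        = D n 0 * q ξ + ∫ t in ξ..y, D (n+1) (t - ξ) * q ξ := by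
      intro ξ
      rw [hH n (y - ξ), add_mul, hconv ξ]
    have hcont2 : Continuous fun ξ => ∫ t in ξ..y, D (n+1) (t - ξ) * q ξ := by
      have e : (fun ξ => ∫ t in ξ..y, D (n+1) (t - ξ) * q ξ)
          = fun ξ => (∫ s in (0:ℝ)..(y - ξ), D (n+1) s) * q ξ := funext hconv
      rw [e]
      exact ((intervalIntegral.continuous_primitive
        (fun a b => (hDc (n+1)).intervalIntegrable a b) 0).comp
        (continuous_const.sub continuous_id)).mul hq
    calc K n y = ∫ ξ in (0:ℝ)..y, (D n 0 * q ξ + ∫ t in ξ..y, D (n+1) (t - ξ) * q ξ) :=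
          intervalIntegral.integral_congr (fun ξ _ => hpoint ξ)
      _ = D n 0 * (∫ ξ in (0:ℝ)..y, q ξ)
            + ∫ ξ in (0:ℝ)..y, ∫ t in ξ..y, D (n+1) (t - ξ) * q ξ := by
          rw [intervalIntegral.integral_add (f := fun ξ => D n 0 * q ξ) ((continuous_const.mul hq).intervalIntegrable _ _)
            (hcont2.intervalIntegrable _ _), intervalIntegral.integral_const_mul]
      _ = D n 0 * (∫ ξ in (0:ℝ)..y, q ξ) + ∫ t in (0:ℝ)..y, K (n+1) t := by
          rw [triangle_swap (fun p => D (n+1) (p.1 - p.2) * q p.2)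
            (((hDc (n+1)).comp (continuous_fst.sub continuous_snd)).mul
              (hq.comp continuous_snd)) hy]
  have hKd : ∀ n, ∀ t ≤ (0:ℝ), HasDerivWithinAt (K n) (D n 0 * q t + K (n+1) t) (Set.Iic 0) t := by
    intro n t ht
    have hR : HasDerivAt (fun y => D n 0 * (∫ ξ in (0:ℝ)..y, q ξ) + ∫ s in (0:ℝ)..y, K (n+1) s)
        (D n 0 * q t + K (n+1) t) t :=
      ((ftc_cont hq 0 t).const_mul (D n 0)).add (ftc_cont (hKc (n+1)) 0 t)
    exact hR.hasDerivWithinAt.congr (fun z hz => hrep n z hz) (hrep n t ht)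
  have hψ : ∀ z ∈ Set.Icc (-1:ℝ) 0, D 0 z + D 2 z - D 4 z = 0 := by
    have hconst := constant_of_has_deriv_right_zero (f := fun w => D 0 w + D 2 w - D 4 w)
      (a := -1) (b := 0)
      ((((hDc 0).add (hDc 2)).sub (hDc 4)).continuousOn)
      (by
        intro z hz
        have hzero := hodeD z ⟨hz.1, hz.2.le⟩
        have hder : HasDerivAt (fun w => D 0 w + D 2 w - D 4 w) (D 1 z + D 3 z - D 5 z) z :=
          ((hDd 0 z).add (hDd 2 z)).sub (hDd 4 z)
        rw [hzero] at hder
        exact hder.hasDerivWithinAt)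
    intro z hz
    have e1 := hconst z hz
    have e2 := hconst 0 (by constructor <;> norm_num)
    have e3 : D 0 0 + D 2 0 - D 4 0 = 0 := by rw [hD00, hD20, hD40]; ring
    linarith
  have hK024 : ∀ y ∈ Set.Icc (-1:ℝ) 0, K 4 y = K 0 y + K 2 y := by
    intro y hy
    have hsum : K 0 y + K 2 y - K 4 y
        = ∫ ξ in (0:ℝ)..y, ((D 0 (y - ξ) + D 2 (y - ξ) - D 4 (y - ξ)) * q ξ) := by
      simp only [hKdef]
      rw [← intervalIntegral.integral_add (hKint 0 y 0 y) (hKint 2 y 0 y),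
        ← intervalIntegral.integral_sub ((hKint 0 y 0 y).add (hKint 2 y 0 y)) (hKint 4 y 0 y)]
      exact intervalIntegral.integral_congr fun ξ _ => by ring
    have hzero : (∫ ξ in (0:ℝ)..y, ((D 0 (y - ξ) + D 2 (y - ξ) - D 4 (y - ξ)) * q ξ)) = 0 := by
      have he : Set.EqOn (fun ξ => (D 0 (y - ξ) + D 2 (y - ξ) - D 4 (y - ξ)) * q ξ)
          (fun _ => (0:ℝ)) (Set.uIcc 0 y) := by
        intro ξ hξ
        rw [Set.uIcc_of_ge hy.2] at hξ
        have hmem : y - ξ ∈ Set.Icc (-1:ℝ) 0 :=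
          ⟨by linarith [hξ.2, hy.1], by linarith [hξ.1]⟩
        simp only
        rw [hψ (y - ξ) hmem, zero_mul]
      rw [intervalIntegral.integral_congr he]
      simp
    linarith
  -- the candidate solution and the ODE system
  set g : ℝ → ℝ := fun z => ∫ t in (0:ℝ)..z, K 0 t with hgdef
  set v : ℝ → (Fin 5 → ℝ) → (Fin 5 → ℝ) :=
    fun t w => ![w 1, w 2, w 3, w 4, w 1 + w 3 + q t] with hvdef
  have hv : ∀ t : ℝ, LipschitzOnWith 2 (v t) Set.univ := by
    intro t
    rw [lipschitzOnWith_univ]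
    apply LipschitzWith.of_dist_le_mul
    intro w w'
    rw [dist_pi_le_iff (by positivity)]
    intro i
    have hb : ∀ k : Fin 5, dist (w k) (w' k) ≤ 2 * dist w w' := by
      intro k
      have h1 := dist_le_pi_dist w w' k
      have h2 : (0:ℝ) ≤ dist w w' := dist_nonneg
      linarith
    have hlast : dist (w 1 + w 3 + q t) (w' 1 + w' 3 + q t) ≤ 2 * dist w w' := by
      have h1 := dist_le_pi_dist w w' 1
      have h3 := dist_le_pi_dist w w' 3
      have key : dist (w 1 + w 3 + q t) (w' 1 + w' 3 + q t)
          ≤ dist (w 1) (w' 1) + dist (w 3) (w' 3) := by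
        rw [Real.dist_eq, Real.dist_eq, Real.dist_eq]
        have e : w 1 + w 3 + q t - (w' 1 + w' 3 + q t) = (w 1 - w' 1) + (w 3 - w' 3) := by ring
        rw [e]
        exact abs_add_le _ _
      linarith
    fin_cases i <;>
      simp only [hvdef, Fin.isValue, NNReal.coe_ofNat, Matrix.cons_val_zero, Matrix.cons_val_one, Matrix.head_cons,
        Matrix.cons_val_two, Matrix.cons_val_three, Matrix.cons_val_four, Matrix.tail_cons] <;>
      first
        | exact hb _
        | exact hlast
  set Fv : ℝ → Fin 5 → ℝ := fun t => ![f j t, deriv (f j) t, iteratedDeriv 2 (f j) t,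
    iteratedDeriv 3 (f j) t, iteratedDeriv 4 (f j) t] with hFvdef
  set Gv : ℝ → Fin 5 → ℝ := fun t => ![g t, K 0 t, K 1 t, K 2 t, K 3 t] with hGvdef
  have hIter : ∀ n (t : ℝ), HasDerivAt (iteratedDeriv n (f j)) (iteratedDeriv (n+1) (f j) t) t := by
    intro n t
    have hd := ((hsm j).differentiable_iteratedDeriv n (by exact_mod_cast ENat.coe_lt_top n)) t
    simpa [iteratedDeriv_succ] using hd.hasDerivAt
  have hF' : ∀ t ∈ Set.Ioc (-1:ℝ) 0, HasDerivWithinAt Fv (v t (Fv t)) (Set.Iic t) t := by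
    intro t ht
    rw [hasDerivWithinAt_pi]
    intro i
    fin_cases i <;>
      simp only [hFvdef, hvdef, Fin.isValue, Matrix.cons_val_zero, Matrix.cons_val_one, Matrix.head_cons,
        Matrix.cons_val_two, Matrix.cons_val_three, Matrix.cons_val_four, Matrix.tail_cons]
    · exact (((hsm j).differentiable (by simp) t).hasDerivAt).hasDerivWithinAt
    · have h1 := (hIter 1 t).hasDerivWithinAt (s := Set.Iic t)
      rwa [iteratedDeriv_one] at h1
    · exact (hIter 2 t).hasDerivWithinAt
    · exact (hIter 3 t).hasDerivWithinAt
    · have h5 := (hIter 4 t).hasDerivWithinAt (s := Set.Iic t)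
      have he : iteratedDeriv 5 (f j) t = deriv (f j) t + iteratedDeriv 3 (f j) t + q t := by
        have h := hode j hj t ⟨ht.1.le, ht.2⟩
        rw [hqdef]
        linarith
      rwa [he] at h5
  have hG' : ∀ t ∈ Set.Ioc (-1:ℝ) 0, HasDerivWithinAt Gv (v t (Gv t)) (Set.Iic t) t := by
    intro t ht
    have hmono : Set.Iic t ⊆ Set.Iic (0:ℝ) := Set.Iic_subset_Iic.mpr ht.2
    rw [hasDerivWithinAt_pi]
    intro i
    fin_cases i <;>
      simp only [hGvdef, hvdef, Fin.isValue, Matrix.cons_val_zero, Matrix.cons_val_one, Matrix.head_cons,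
        Matrix.cons_val_two, Matrix.cons_val_three, Matrix.cons_val_four, Matrix.tail_cons]
    · have h1 := (ftc_cont (hKc 0) 0 t).hasDerivWithinAt (s := Set.Iic t)
      rw [hgdef]
      exact h1
    · have h1 := (hKd 0 t ht.2).mono hmono
      rwa [hD00, zero_mul, zero_add] at h1
    · have h1 := (hKd 1 t ht.2).mono hmono
      rwa [hD10, zero_mul, zero_add] at h1
    · have h1 := (hKd 2 t ht.2).mono hmono
      rwa [hD20, zero_mul, zero_add] at h1
    · have h1 := (hKd 3 t ht.2).mono hmono
      rw [hD30, one_mul] at h1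
      have he : q t + K 4 t = K 0 t + K 2 t + q t := by
        rw [hK024 t ⟨ht.1.le, ht.2⟩]; ring
      rwa [he] at h1
  have hFc : ContinuousOn Fv (Set.Icc (-1:ℝ) 0) := by
    refine Continuous.continuousOn ?_
    apply continuous_pi
    intro i
    fin_cases i <;>
      simp only [hFvdef, Fin.isValue, Matrix.cons_val_zero, Matrix.cons_val_one, Matrix.head_cons,
        Matrix.cons_val_two, Matrix.cons_val_three, Matrix.cons_val_four, Matrix.tail_cons]
    · exact (hsm j).continuous
    · have h1 := (hsm j).continuous_iteratedDeriv 1 (by simp)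
      rwa [iteratedDeriv_one] at h1
    · exact (hsm j).continuous_iteratedDeriv 2 (WithTop.coe_le_coe.mpr le_top)
    · exact (hsm j).continuous_iteratedDeriv 3 (WithTop.coe_le_coe.mpr le_top)
    · exact (hsm j).continuous_iteratedDeriv 4 (WithTop.coe_le_coe.mpr le_top)
  have hGc : ContinuousOn Gv (Set.Icc (-1:ℝ) 0) := by
    refine Continuous.continuousOn ?_
    apply continuous_pi
    intro i
    fin_cases i <;>
      simp only [hGvdef, Fin.isValue, Matrix.cons_val_zero, Matrix.cons_val_one, Matrix.head_cons,
        Matrix.cons_val_two, Matrix.cons_val_three, Matrix.cons_val_four, Matrix.tail_cons]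
    · rw [hgdef]
      exact intervalIntegral.continuous_primitive (fun a b => (hKc 0).intervalIntegrable a b) 0
    · exact hKc 0
    · exact hKc 1
    · exact hKc 2
    · exact hKc 3
  have hinit : Fv 0 = Gv 0 := by
    obtain ⟨b0, b1, b2, b3, b4⟩ := hbc j hj
    funext i
    fin_cases i <;>
      simp only [hFvdef, hGvdef, hgdef, hKdef, Fin.isValue, Matrix.cons_val_zero, Matrix.cons_val_one,
        Matrix.head_cons, Matrix.cons_val_two, Matrix.cons_val_three, Matrix.cons_val_four,
        Matrix.tail_cons, intervalIntegral.integral_same] <;>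
      first
        | exact b0 | exact b1 | exact b2 | exact b3 | exact b4
  have hEq : Set.EqOn Fv Gv (Set.Icc (-1:ℝ) 0) :=
    ODE_solution_unique_of_mem_Icc_left (fun t _ => hv t) hFc hF' (fun _ _ => Set.mem_univ _) hGc hG'
      (fun _ _ => Set.mem_univ _) hinit
  have hx0 := congrFun (hEq hx) 0
  simp only [hFvdef, hGvdef, Matrix.cons_val_zero] at hx0
  rw [hx0, hgdef]
  refine intervalIntegral.integral_congr fun z _ => ?_
  simp only [hKdef, hDdef, iteratedDeriv_zero, hqdef]
end

section
/- Let ψ be a real-analytic function on [−1,0] (analytic in a neighborhood of 0) such that ∂ₓʲ Pⁿ ψ(0) = 0 for all n ≥ 0 and j = 0,1,2,3,4, where Pψ = ψ' + ψ''' − ψ⁽⁵⁾. Then ψ ≡ 0 on [−1,0]. -/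
/-!
Since `P = ∂ + ∂³ - ∂⁵`, the `m`-th derivative of `P f` at `0` is
`f⁽ᵐ⁺¹⁾(0) + f⁽ᵐ⁺³⁾(0) - f⁽ᵐ⁺⁵⁾(0)`. Applying this to the iterates `Pⁿ ψ`, strong induction on
the order shows that the vanishing of the first five derivatives of every `Pⁿ ψ` at `0` forces
every derivative of `ψ` at `0` to vanish. So `ψ` is flat at `0`, hence zero near `0`, hence zero on
the connected set `[-1, 0]` by the identity theorem.
-/

noncomputable def Pop : (ℝ → ℝ) → (ℝ → ℝ) := fun g x =>
  deriv g x + iteratedDeriv 3 g x - iteratedDeriv 5 g x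

open Filter Topology

section IteratedDeriv

variable {𝕜 : Type*} [NontriviallyNormedField 𝕜] {E : Type*} [NormedAddCommGroup E]
  [NormedSpace 𝕜 E]

theorem iteratedDeriv_iteratedDeriv (j m : ℕ) (f : 𝕜 → E) :
    iteratedDeriv j (iteratedDeriv m f) = iteratedDeriv (j + m) f := by
  simp only [iteratedDeriv_eq_iterate, Function.iterate_add_apply]

theorem AnalyticAt.eventually_eq_zero_of_iteratedDeriv_eq_zero [CharZero 𝕜] [CompleteSpace E]
    {f : 𝕜 → E} {x : 𝕜} (hf : AnalyticAt 𝕜 f x) (hflat : ∀ n, iteratedDeriv n f x = 0) :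
    f =ᶠ[𝓝 x] 0 := by
  refine analyticOrderAt_eq_top.mp (ENat.eq_top_iff_forall_ge.mpr fun n => ?_)
  exact (natCast_le_analyticOrderAt_iff_iteratedDeriv_eq_zero hf).mpr fun i _ => hflat i

end IteratedDeriv

section Pop

variable {f : ℝ → ℝ} {x : ℝ}

theorem AnalyticAt.pop (hf : AnalyticAt ℝ f x) : AnalyticAt ℝ (Pop f) x := by
  have h : ∀ n, AnalyticAt ℝ (iteratedDeriv n f) x := fun n => by
    simpa only [iteratedDeriv_eq_iterate] using hf.iterated_deriv n
  exact (hf.deriv.add (h 3)).sub (h 5)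

theorem iteratedDeriv_pop (hf : AnalyticAt ℝ f x) (m : ℕ) :
    iteratedDeriv m (Pop f) x =
      iteratedDeriv (m + 1) f x + iteratedDeriv (m + 3) f x - iteratedDeriv (m + 5) f x := by
  have h : ∀ n, ContDiffAt ℝ m (iteratedDeriv n f) x := fun n => by
    simpa only [iteratedDeriv_eq_iterate] using (hf.iterated_deriv n).contDiffAt
  have hPop : Pop f = iteratedDeriv 1 f + iteratedDeriv 3 f - iteratedDeriv 5 f := by
    ext y
    simp only [Pop, iteratedDeriv_one, Pi.add_apply, Pi.sub_apply]
  rw [hPop, iteratedDeriv_sub (f := iteratedDeriv 1 f + iteratedDeriv 3 f) ((h 1).add (h 3)) (h 5),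
    iteratedDeriv_add (h 1) (h 3)]
  simp only [iteratedDeriv_iteratedDeriv]

theorem iteratedDeriv_eq_zero_of_iterate_pop (hf : AnalyticAt ℝ f x)
    (hvanish : ∀ n : ℕ, ∀ j ≤ 4, iteratedDeriv j (Pop^[n] f) x = 0) (k : ℕ) :
    iteratedDeriv k f x = 0 := by
  induction k using Nat.strong_induction_on generalizing f with
  | _ k ih =>
    rcases le_or_gt k 4 with hk | hk
    · exact hvanish 0 k hk
    · obtain ⟨m, rfl⟩ := Nat.exists_eq_add_of_le' hk
      have hvanish_pop : ∀ n : ℕ, ∀ j ≤ 4, iteratedDeriv j (Pop^[n] (Pop f)) x = 0 :=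
        fun n => hvanish (n + 1)
      have hPm := ih m (by omega) hf.pop hvanish_pop
      have h1 := ih (m + 1) (by omega) hf hvanish
      have h3 := ih (m + 3) (by omega) hf hvanish
      linarith [iteratedDeriv_pop hf m]

end Pop

theorem unique_continuation_from_flat_data (ψ : ℝ → ℝ)
    (hψ : ∀ x ∈ Set.Icc (-1 : ℝ) 0, AnalyticAt ℝ ψ x)
    (hvanish : ∀ n : ℕ, ∀ j ≤ 4, iteratedDeriv j (Pop^[n] ψ) 0 = 0) :
    ∀ x ∈ Set.Icc (-1 : ℝ) 0, ψ x = 0 := by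
  have h0 : (0 : ℝ) ∈ Set.Icc (-1 : ℝ) 0 := by norm_num
  have hflat := iteratedDeriv_eq_zero_of_iterate_pop (hψ 0 h0) hvanish
  exact fun x hx => AnalyticOnNhd.eqOn_zero_of_preconnected_of_eventuallyEq_zero hψ
    isPreconnected_Icc h0 ((hψ 0 h0).eventually_eq_zero_of_iteratedDeriv_eq_zero hflat) hx
end
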